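/- For every element g of D∞, the word obtained by the explicit reduced-word construction (an alternating word in s₀ and s₁ of the appropriate length) has product equal to g and length equal to the Coxeter length ℓ(g); in particular it is a reduced word for g. -/

import Mathlib

open DihedralGroup CoxeterSystem

/-- The infinite dihedral group `D∞`, realized as `DihedralGroup 0`. -/
abbrev Dinf := DihedralGroup 0

/-- View an element of `ZMod 0` as an integer. -/
def toInt (k : ZMod 0) : ℤ := k

/-- The Coxeter matrix of type `A₁⁽¹⁾`: diagonal entries `1`, off-diagonal
entries `0` (encoding infinite order). -/
def Mmat : CoxeterMatrix (Fin 2) where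
  M := !![1, 0; 0, 1]
  isSymm := by decide
  diagonal := by decide
  off_diagonal := by
    intro i i' h
    fin_cases i <;> fin_cases i' <;> first | exact absurd rfl h | decide

/-- The generator index `0` (resp. `1`) corresponds to the geometric
reflection `s₀ = sr 0` (resp. `s₁ = sr 1`). -/
def toGen : Fin 2 → Dinf := fun i => if i = 0 then sr 0 else sr 1

/-- The product in `D∞` of a word in the two generators `s₀, s₁`. -/
def wprod (w : List (Fin 2)) : Dinf := (w.map toGen).prod

/-- The explicit reduced word (an alternating word in `s₀` and `s₁`) for an
element of `D∞`. -/
def reducedWord : Dinf → List (Fin 2)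
  | .r k => if 0 ≤ toInt k then alternatingWord 0 1 (2 * (toInt k).natAbs)
      else alternatingWord 1 0 (2 * (toInt k).natAbs)
  | .sr k => if 0 < toInt k then alternatingWord 0 1 (2 * (toInt k).natAbs - 1)
      else alternatingWord 1 0 (2 * (toInt k).natAbs + 1)

/-- The degree map `φ : D∞ → ℕ²`, counting occurrences of `s₀` and of `s₁` in
a reduced word. -/
def φ (g : Dinf) : ℕ × ℕ := ((reducedWord g).count 0, (reducedWord g).count 1)

/-- The explicit (computable) length function on `D∞`. -/
def cLength : Dinf → ℕ
  | .r k => 2 * (toInt k).natAbs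
  | .sr k => if 0 < toInt k then 2 * (toInt k).natAbs - 1 else 2 * (toInt k).natAbs + 1

/-- `t` is a reflection of `D∞`, i.e. an element of the form `sr k`. -/
def IsReflectionD (t : Dinf) : Prop := ∃ k, t = sr k

/-- The moment graph of `D∞` has an edge `u → v` of degree `α` iff
`v = u * s_α` where `s_α` is the (root) reflection of degree `α`. -/
def IsEdge (u v : Dinf) (α : ℕ × ℕ) : Prop := ∃ t : Dinf, IsReflectionD t ∧ φ t = α ∧ v = u * t

/-- Increasing chains in the moment graph of `D∞`: the Coxeter length strictly
increases along each edge, and the degree of the chain is the sum of the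
degrees of its edges. -/
inductive Chain (cs : CoxeterSystem Mmat Dinf) : Dinf → Dinf → ℕ × ℕ → Prop where
  | refl (u : Dinf) : Chain cs u u 0
  | step {u v w : Dinf} {d α : ℕ × ℕ} : Chain cs u v d → IsEdge v w α →
      cs.length v < cs.length w → Chain cs u w (d + α)

/-- Bruhat order on `D∞`: `u ≤ v` iff there is an increasing chain from `u`
to `v` in the moment graph. -/
def BruhatLE (cs : CoxeterSystem Mmat Dinf) (u v : Dinf) : Prop := ∃ d, Chain cs u v d

/-- Strict Bruhat order on `D∞`. -/
def BruhatLT (cs : CoxeterSystem Mmat Dinf) (u v : Dinf) : Prop :=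
  BruhatLE cs u v ∧ u ≠ v

/-- `v` is reachable from `u` by an increasing chain of degree at most `d`. -/
def Reachable (cs : CoxeterSystem Mmat Dinf) (u : Dinf) (d : ℕ × ℕ) (v : Dinf) : Prop :=
  ∃ d', d' ≤ d ∧ Chain cs u v d'

/-- The algebraic set `A_d(u) = { v | ℓ(uv) = ℓ(u) + ℓ(v), φ(v) ≤ d }`. -/
def Ad (cs : CoxeterSystem Mmat Dinf) (u : Dinf) (d : ℕ × ℕ) : Set Dinf :=
  { v | cs.length (u * v) = cs.length u + cs.length v ∧ φ v ≤ d }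

/-- `w` is maximal in `S` with respect to the Bruhat order. -/
def IsMaximalIn (cs : CoxeterSystem Mmat Dinf) (w : Dinf) (S : Set Dinf) : Prop :=
  w ∈ S ∧ ∀ v ∈ S, ¬ BruhatLT cs w v

/-- The combinatorial curve neighborhood `Γ_d(u)`: the Bruhat-maximal elements
among those reachable from `u` by an increasing chain of degree `≤ d`. -/
def CurveNeighborhood (cs : CoxeterSystem Mmat Dinf) (u : Dinf) (d : ℕ × ℕ) : Set Dinf :=
  { v | Reachable cs u d v ∧ ∀ v', Reachable cs u d v' → ¬ BruhatLT cs v v' }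

lemma wprod_concat (w : List (Fin 2)) (i : Fin 2) :
    wprod (w.concat i) = wprod w * toGen i := by
  simp [wprod, List.concat_eq_append]

lemma wprod_alt (m : ℕ) :
    wprod (alternatingWord 0 1 (2*m)) = r ((m : ℤ) : ZMod 0) ∧
    wprod (alternatingWord 1 0 (2*m)) = r ((-(m : ℤ) : ℤ) : ZMod 0) ∧
    wprod (alternatingWord 0 1 (2*m+1)) = sr (((m : ℤ)+1 : ℤ) : ZMod 0) ∧
    wprod (alternatingWord 1 0 (2*m+1)) = sr ((-(m : ℤ) : ℤ) : ZMod 0) := by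
  have g0 : toGen 0 = sr 0 := rfl
  have g1 : toGen 1 = sr 1 := rfl
  induction m with
  | zero =>
    refine ⟨?_, ?_, ?_, ?_⟩ <;>
      · simp only [Nat.mul_zero, Nat.zero_add, Nat.cast_zero, alternatingWord, wprod,
          List.concat, List.map, List.prod_cons, List.prod_nil, g0, g1, mul_one,
          DihedralGroup.one_def]
        try norm_num
        rfl
  | succ m ih =>
    obtain ⟨h1, h2, h3, h4⟩ := ih
    have e1 : 2*(m+1) = (2*m+1)+1 := by ring
    have e2 : 2*(m+1)+1 = ((2*m+1)+1)+1 := by ring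
    have c1 : wprod (alternatingWord 0 1 (2*(m+1))) = r ((((m:ℕ)+1 : ℤ)) : ZMod 0) := by
      rw [e1, alternatingWord_succ, wprod_concat, h4, g1]
      erw [sr_mul_sr]
      congr 1
      show (1:ℤ) - -(m:ℤ) = (m:ℤ)+1
      omega

    have c2 : wprod (alternatingWord 1 0 (2*(m+1))) = r ((-((m:ℕ)+1 : ℤ)) : ZMod 0) := by
      rw [e1, alternatingWord_succ, wprod_concat, h3, g0]
      erw [sr_mul_sr]
      congr 1

    have c3 : wprod (alternatingWord 0 1 (2*(m+1)+1)) = sr (((((m:ℕ)+1):ℤ)+1 : ℤ) : ZMod 0) := by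
      rw [e2, alternatingWord_succ, ← e1, wprod_concat, c2, g1]
      erw [r_mul_sr]
      congr 1
      show (1:ℤ) - -((m:ℤ)+1) = (m:ℤ)+1+1
      omega

    have c4 : wprod (alternatingWord 1 0 (2*(m+1)+1)) = sr ((-(((m:ℕ)+1):ℤ) : ℤ) : ZMod 0) := by
      rw [e2, alternatingWord_succ, ← e1, wprod_concat, c1, g0]
      erw [r_mul_sr]
      congr 1

    push_cast at c1 c2 c3 c4 ⊢
    exact ⟨c1, c2, c3, c4⟩

lemma toInt_add (a b : ZMod 0) : toInt (a+b) = toInt a + toInt b := rfl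
lemma toInt_sub (a b : ZMod 0) : toInt (a-b) = toInt a - toInt b := rfl
lemma toInt_zero : toInt 0 = 0 := rfl
lemma toInt_one : toInt 1 = 1 := rfl

lemma cLength_mul (i : Fin 2) (g : Dinf) : cLength (toGen i * g) ≤ cLength g + 1 := by
  have h : toGen i = sr 0 ∨ toGen i = sr 1 := by
    fin_cases i
    · exact Or.inl rfl
    · exact Or.inr rfl
  rcases h with h | h <;> rw [h] <;> cases g with
  | r k =>
      simp only [sr_mul_r, cLength]
      split_ifs <;> simp only [toInt_add, toInt_zero, toInt_one] at * <;> omega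
  | sr k =>
      simp only [sr_mul_sr, cLength, toInt_sub, toInt_zero, toInt_one]
      split_ifs <;> omega

lemma cLength_wprod (w : List (Fin 2)) : cLength (wprod w) ≤ w.length := by
  induction w with
  | nil => simp [wprod]; rfl
  | cons i w ih =>
      have : wprod (i :: w) = toGen i * wprod w := by simp [wprod]
      rw [this]
      calc cLength (toGen i * wprod w) ≤ cLength (wprod w) + 1 := cLength_mul i _
        _ ≤ w.length + 1 := by omega
        _ = (i :: w).length := by simp

lemma ofInt_toInt (a : ZMod 0) : ((toInt a : ℤ) : ZMod 0) = a := rfl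

section Main
variable (cs : CoxeterSystem Mmat Dinf) (h0 : cs.simple 0 = sr 0) (h1 : cs.simple 1 = sr 1)

include h0 h1

lemma wordProd_eq (w : List (Fin 2)) : cs.wordProd w = wprod w := by
  have hs : ∀ i, cs.simple i = toGen i := by
    intro i; fin_cases i
    · exact h0
    · exact h1
  induction w with
  | nil => simp [wprod]
  | cons i w ih =>
      rw [cs.wordProd_cons, ih, hs]
      simp [wprod]

lemma prod_reducedWord (g : Dinf) : cs.wordProd (reducedWord g) = g := by
  rw [wordProd_eq cs h0 h1]
  cases g with
  | r k =>
      rw [reducedWord]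
      split_ifs with h
      · rw [(wprod_alt (toInt k).natAbs).1, ← ofInt_toInt k]
        congr 1
        exact_mod_cast (by omega : (((toInt k).natAbs : ℤ)) = toInt k)
      · rw [(wprod_alt (toInt k).natAbs).2.1, ← ofInt_toInt k]
        congr 1
        exact_mod_cast (by omega : (-((toInt k).natAbs : ℤ)) = toInt k)
  | sr k =>
      rw [reducedWord]
      split_ifs with h
      · have e : 2 * (toInt k).natAbs - 1 = 2 * ((toInt k).natAbs - 1) + 1 := by omega
        rw [e, (wprod_alt ((toInt k).natAbs - 1)).2.2.1, ← ofInt_toInt k]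
        congr 1
        exact_mod_cast (by omega : ((((toInt k).natAbs - 1 : ℕ) : ℤ) + 1) = toInt k)
      · rw [(wprod_alt (toInt k).natAbs).2.2.2, ← ofInt_toInt k]
        congr 1
        exact_mod_cast (by omega : (-((toInt k).natAbs : ℤ)) = toInt k)

lemma len_reducedWord (g : Dinf) : (reducedWord g).length = cs.length g := by
  have hc : (reducedWord g).length = cLength g := by
    cases g with
    | r k => rw [reducedWord, cLength]; split_ifs <;> rw [length_alternatingWord]
    | sr k => rw [reducedWord, cLength]; split_ifs <;> rw [length_alternatingWord]
  have hle : cs.length g ≤ cLength g := by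
    have := cs.length_wordProd_le (reducedWord g)
    rw [prod_reducedWord cs h0 h1 g] at this
    omega
  have hge : cLength g ≤ cs.length g := by
    obtain ⟨w, hw, hgw⟩ := cs.exists_reduced_word g
    calc cLength g = cLength (wprod w) := by rw [← wordProd_eq cs h0 h1, ← hgw]
      _ ≤ w.length := cLength_wprod w
      _ = cs.length g := by rw [hgw]; exact hw.symm
  omega

theorem stmt2' (g : Dinf) :
    cs.wordProd (reducedWord g) = g ∧ (reducedWord g).length = cs.length g ∧
    cs.IsReduced (reducedWord g) := by
  refine ⟨prod_reducedWord cs h0 h1 g, len_reducedWord cs h0 h1 g, ?_⟩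
  rw [CoxeterSystem.IsReduced, prod_reducedWord cs h0 h1 g, len_reducedWord cs h0 h1 g]

end Main

/-- The explicit alternating word `reducedWord g` has product `g` and length
`ℓ(g)`; in particular it is a reduced word for `g`. -/
theorem stmt2 (cs : CoxeterSystem Mmat Dinf)
    (h0 : cs.simple 0 = sr 0) (h1 : cs.simple 1 = sr 1) (g : Dinf) :
    cs.wordProd (reducedWord g) = g ∧ (reducedWord g).length = cs.length g ∧
    cs.IsReduced (reducedWord g) :=
  stmt2' cs h0 h1 g
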